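/- arXiv:1305.1451 — 3 statements merged into one kernel-verified Lean document; each statement's English description precedes it below -/
import Mathlib

section
/- Let G be a (m,n)-cylindrical grid (the Cartesian product of a cycle C_m of length m with a path P_n on n vertices), and let Π be a pattern of size k (a collection of k pairwise disjoint subsets of V(G), each of size 1 or 2) with all vertices of Π contained in one boundary cycle of G. If Π is cross-free (there do not exist distinct vertices a,b,c,d of Π with {a,b},{c,d} ∈ Π appearing in the cyclic order a,c,b,d or a,d,b,c along the boundary cycle) and n ≥ k, then Π is realizable in G, i.e., there exist pairwise vertex-disjoint paths in G, one joining the two vertices of each two-element member of Π (singleton members requiring only that the vertex be covered trivially). -/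
open SimpleGraph Finset

/-- `x` lies in the open cyclic arc from `a` to `b` (in the natural cyclic order
of `Fin m`). -/
def cyclicBtw {m : ℕ} (a x b : Fin m) : Prop :=
  if a < b then a < x ∧ x < b else a < x ∨ x < b

/-- Two chords `{a,b}` and `{c,d}` of a cycle *cross* iff exactly one of `c`, `d`
lies in the open arc from `a` to `b`. -/
def chordsCross {m : ℕ} (a b c d : Fin m) : Prop :=
  Xor' (cyclicBtw a c b) (cyclicBtw a d b)

/-!
Cut the boundary cycle open between `m - 1` and `0`: a chord `{a, b}` becomes the interval
`[min a b, max a b]` of `ℕ`, and two chords with distinct ends do not cross iff their intervals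
are nested or disjoint. Route the pair `{a, b}` along the *arch* that climbs column `a` to height
`d`, runs along row `d` to column `b` and descends again, where `d` is the number of intervals
strictly inside `[min a b, max a b]`. Strictly nested intervals get strictly different heights, so
the arch of the inner one passes below the horizontal part of the outer one, and arches over
disjoint intervals are disjoint. Every height is below `k ≤ n`, and all arches live in the planar
grid `P_m □ P_n`, a subgraph of the cylinder.
-/

theorem not_chordsCross_iff {m : ℕ} {a b c d : Fin m} (hc : c ≠ a ∧ c ≠ b)
    (hd : d ≠ a ∧ d ≠ b) :
    ¬ chordsCross a b c d ↔
      (min (a : ℕ) b < c ∧ (c : ℕ) < max (a : ℕ) b ↔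
        min (a : ℕ) b < d ∧ (d : ℕ) < max (a : ℕ) b) := by
  change ¬ Xor (cyclicBtw a c b) (cyclicBtw a d b) ↔ _
  simp only [not_xor, cyclicBtw, Fin.lt_def, ne_eq, Fin.ext_iff] at *
  split_ifs <;> omega

/-- The lattice points of the arch of height `h` over the columns `a` and `b`. -/
def arch (a b h : ℕ) : Set (ℕ × ℕ) :=
  {p | (p.1 = a ∨ p.1 = b) ∧ p.2 ≤ h ∨ p.2 = h ∧ min a b ≤ p.1 ∧ p.1 ≤ max a b}

theorem disjoint_arch {a b c d h h' : ℕ} (hends : a ≠ c ∧ a ≠ d ∧ b ≠ c ∧ b ≠ d)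
    (hcross : min a b < c ∧ c < max a b ↔ min a b < d ∧ d < max a b)
    (hin : min a b < min c d → max c d < max a b → h' < h)
    (hout : min c d < min a b → max a b < max c d → h < h') :
    Disjoint (arch a b h) (arch c d h') := by
  rw [Set.disjoint_left]
  rintro ⟨x, y⟩ hp hp'
  simp only [arch, Set.mem_ofPred_eq] at hp hp'
  omega

def nestingDepth {ι : Type*} [Fintype ι] (lo hi : ι → ℕ) (i : ι) : ℕ :=
  #{j | lo i < lo j ∧ hi j < hi i}

section nestingDepth

variable {ι : Type*} [Fintype ι] (lo hi : ι → ℕ)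

theorem nestingDepth_lt_card (i : ι) : nestingDepth lo hi i < Fintype.card ι :=
  card_lt_card <| filter_ssubset.mpr ⟨i, mem_univ i, by simp⟩

theorem nestingDepth_lt_nestingDepth {i j : ι} (hlo : lo i < lo j) (hhi : hi j < hi i) :
    nestingDepth lo hi j < nestingDepth lo hi i := by
  refine card_lt_card <| (ssubset_iff_of_subset fun l hl => ?_).mpr ⟨j, ?_, ?_⟩
  · simp only [mem_filter, mem_univ, true_and] at hl ⊢
    omega
  · simpa using ⟨hlo, hhi⟩
  · simp

end nestingDepth

theorem SimpleGraph.boxProd_mono_left {α β : Type*} {G G' : SimpleGraph α} (H : SimpleGraph β)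
    (h : G ≤ G') : G.boxProd H ≤ G'.boxProd H :=
  fun _ _ hadj => hadj.imp (And.imp_left (@h _ _)) id

theorem SimpleGraph.exists_walk_support_eq_map_range {V : Type*} (G : SimpleGraph V)
    (f : ℕ → V) (L : ℕ) (hadj : ∀ j < L, G.Adj (f j) (f (j + 1))) :
    ∃ w : G.Walk (f 0) (f L), w.support = (List.range (L + 1)).map f := by
  induction L with
  | zero => exact ⟨Walk.nil, rfl⟩
  | succ L ih =>
    obtain ⟨w, hw⟩ := ih fun j hj => hadj j (by omega)
    exact ⟨w.concat (hadj L (by omega)), by simp [Walk.support_concat, hw, List.range_succ]⟩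

theorem SimpleGraph.exists_isPath_of_injOn {V : Type*} {G : SimpleGraph V} {u v : V}
    (f : ℕ → V) (L : ℕ) (h0 : f 0 = u) (hL : f L = v)
    (hadj : ∀ j < L, G.Adj (f j) (f (j + 1))) (hinj : Set.InjOn f (Set.Iic L)) :
    ∃ w : G.Walk u v, w.IsPath ∧ ∀ x ∈ w.support, ∃ j ≤ L, f j = x := by
  subst h0 hL
  obtain ⟨w, hw⟩ := G.exists_walk_support_eq_map_range f L hadj
  have hrange {j : ℕ} : j ∈ List.range (L + 1) ↔ j ∈ Set.Iic L := by simp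
  refine ⟨w, .mk' ?_, fun x hx => ?_⟩
  · rw [hw]
    exact List.nodup_range.map_on fun i hi j hj => hinj (hrange.mp hi) (hrange.mp hj)
  · rw [hw] at hx
    obtain ⟨j, hj, rfl⟩ := List.mem_map.mp hx
    exact ⟨j, hrange.mp hj, rfl⟩

theorem exists_isPath_arch_of_lt {m n : ℕ} {a b : Fin m} (hab : a < b) (h : Fin n) :
    ∃ w : ((pathGraph m).boxProd (pathGraph n)).Walk (a, ⟨0, h.pos⟩) (b, ⟨0, h.pos⟩),
      w.IsPath ∧ ∀ v ∈ w.support, ((v.1 : ℕ), (v.2 : ℕ)) ∈ arch a b h := by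
  rw [Fin.lt_def] at hab
  -- step `j` climbs column `a` for `j ≤ h`, then runs along row `h`, then descends column `b`
  let col : ℕ → ℕ := fun j => a + (min j (h + (b - a)) - h)
  let row : ℕ → ℕ := fun j => min h (min j (2 * h + (b - a) - j))
  have hcol (j : ℕ) : col j < m := by simp only [col]; omega
  have hrow (j : ℕ) : row j < n := by simp only [row]; omega
  obtain ⟨w, hw, hsupp⟩ := exists_isPath_of_injOn (G := (pathGraph m).boxProd (pathGraph n))
    (u := (a, ⟨0, h.pos⟩)) (v := (b, ⟨0, h.pos⟩))
    (fun j => (⟨col j, hcol j⟩, ⟨row j, hrow j⟩)) (2 * h + (b - a))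
    (by simp [col, row]) (by simp only [col, row, Prod.mk.injEq, Fin.ext_iff]; omega)
    (fun j hj => by simp only [boxProd_adj, pathGraph_adj, Fin.ext_iff, col, row]; omega)
    (fun i hi j hj hij => by
      simp only [Set.mem_Iic, Prod.mk.injEq, Fin.mk.injEq, col, row] at hi hj hij
      omega)
  refine ⟨w, hw, fun v hv => ?_⟩
  obtain ⟨j, hj, rfl⟩ := hsupp v hv
  simp only [arch, Set.mem_ofPred_eq, col, row]
  omega

theorem exists_isPath_arch {m n : ℕ} (a b : Fin m) (h : Fin n) :
    ∃ w : ((pathGraph m).boxProd (pathGraph n)).Walk (a, ⟨0, h.pos⟩) (b, ⟨0, h.pos⟩),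
      w.IsPath ∧ ∀ v ∈ w.support, ((v.1 : ℕ), (v.2 : ℕ)) ∈ arch a b h := by
  rcases lt_trichotomy a b with hab | rfl | hba
  · exact exists_isPath_arch_of_lt hab h
  · refine ⟨.nil, .nil, fun v hv => ?_⟩
    rw [Walk.support_nil, List.mem_singleton] at hv
    exact hv ▸ Or.inl ⟨Or.inl rfl, Nat.zero_le _⟩
  · obtain ⟨w, hw, hsupp⟩ := exists_isPath_arch_of_lt hba h
    refine ⟨w.reverse, hw.reverse, fun v hv => ?_⟩
    rw [Walk.support_reverse, List.mem_reverse] at hv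
    simpa only [arch, Set.mem_ofPred_eq, or_comm, min_comm, max_comm] using hsupp v hv

theorem cylindrical_grid_linkage_general (m n k : ℕ) (hn0 : 0 < n) (hnk : k ≤ n)
    (s t : Fin k → Fin m)
    (hdisj : ∀ i j : Fin k, i ≠ j → ({s i, t i} : Set (Fin m)) ∩ {s j, t j} = ∅)
    (hcf : ∀ i j : Fin k, i ≠ j → ¬ chordsCross (s i) (t i) (s j) (t j)) :
    ∃ w : ∀ i : Fin k,
        ((cycleGraph m).boxProd (pathGraph n)).Walk
          (s i, ⟨0, hn0⟩) (t i, ⟨0, hn0⟩),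
      (∀ i, (w i).IsPath) ∧
      ∀ i j : Fin k, i ≠ j → (w i).support.Disjoint (w j).support := by
  let lo (i : Fin k) : ℕ := min (s i : ℕ) (t i)
  let hi (i : Fin k) : ℕ := max (s i : ℕ) (t i)
  let depth := nestingDepth lo hi
  have hdepth (i : Fin k) : depth i < n :=
    (nestingDepth_lt_card lo hi i).trans_le (by simpa using hnk)
  choose w hw using fun i => exists_isPath_arch (s i) (t i) ⟨depth i, hdepth i⟩
  have hle := boxProd_mono_left (pathGraph n) (pathGraph_le_cycleGraph (n := m))
  refine ⟨fun i => (w i).mapLe hle, fun i => (hw i).1.mapLe hle, fun i j hij v hvi hvj => ?_⟩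
  rw [Walk.support_mapLe_eq_support] at hvi hvj
  have hends := hdisj i j hij
  simp only [Set.eq_empty_iff_forall_notMem, Set.mem_inter_iff, Set.mem_insert_iff,
    Set.mem_singleton_iff, not_and, forall_eq_or_imp, forall_eq] at hends
  have harch := disjoint_arch (h := depth i) (h' := depth j)
    (by simp only [← Fin.val_inj] at hends; omega)
    ((not_chordsCross_iff (by tauto) (by tauto)).mp (hcf i j hij))
    (nestingDepth_lt_nestingDepth lo hi) (nestingDepth_lt_nestingDepth lo hi)
  exact Set.disjoint_left.mp harch ((hw i).2 v hvi) ((hw j).2 v hvj)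

/-- Lemma `cgrid`.  Let `G = C_m □ P_n` be the `(m,n)`-cylindrical grid
and let `Π = {{(s i,0),(t i,0)} : i < k}` be a pattern of size `k` (pairwise disjoint sets
of size 1 or 2, singletons corresponding to `s i = t i`) whose vertices all lie on the
boundary cycle `C_m × {0}`.  If `Π` is cross-free and `n ≥ k`, then `Π` is realizable in
`G`: there are pairwise vertex-disjoint paths joining `(s i, 0)` to `(t i, 0)`. -/
theorem cylindrical_grid_linkage (m n k : ℕ) (hm : 3 ≤ m) (hn0 : 0 < n) (hnk : k ≤ n)
    (s t : Fin k → Fin m)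
    (hdisj : ∀ i j : Fin k, i ≠ j → ({s i, t i} : Set (Fin m)) ∩ {s j, t j} = ∅)
    (hcf : ∀ i j : Fin k, i ≠ j → ¬ chordsCross (s i) (t i) (s j) (t j)) :
    ∃ w : ∀ i : Fin k,
        ((cycleGraph m).boxProd (pathGraph n)).Walk
          (s i, ⟨0, hn0⟩) (t i, ⟨0, hn0⟩),
      (∀ i, (w i).IsPath) ∧
      ∀ i j : Fin k, i ≠ j → (w i).support.Disjoint (w j).support :=
  cylindrical_grid_linkage_general m n k hn0 hnk s t hdisj hcf
end

section
/- For vertex sets V_1 and V_2 in a finite graph G, the function assigning to each A ⊆ V_1 the maximum number of pairwise vertex-disjoint paths from A to V_2 in G is the rank function of a matroid on V_1. -/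
/-- There are `q` pairwise vertex-disjoint paths in `G`, each starting in `A` and ending
in `B` (a path may be a single vertex when its start lies in `A ∩ B`). -/
def HasDisjointPaths {V : Type*} (G : SimpleGraph V) (A B : Set V) (q : ℕ) : Prop :=
  ∃ (a b : Fin q → V) (w : ∀ i, G.Walk (a i) (b i)),
    (∀ i, a i ∈ A ∧ b i ∈ B ∧ (w i).IsPath) ∧
    ∀ i j : Fin q, i ≠ j → (w i).support.Disjoint (w j).support

/-- The maximum number `κ(A)` of pairwise vertex-disjoint `A`–`V₂` paths in `G`. -/
noncomputable def maxDisjointPaths {V : Type*} (G : SimpleGraph V) (V₂ A : Set V) : ℕ :=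
  sSup {q : ℕ | HasDisjointPaths G A V₂ q}

/-!
By Menger's theorem, `κ(A)` is the least size of a vertex set separating `A` from `V₂`, so the
rank axioms become statements about separators. If `S` separates `A`, then `S + x` separates
`A + x`. If `S` and `S'` separate `A` and `A'`, let `X` and `X'` be the sets of vertices cut off
from `V₂` by `S` and `S'`. The boundaries (vertices in `V₂` or with a neighbour outside) of
`X ∪ X'` and `X ∩ X'` separate `A ∪ A'` and `A ∩ A'`; their union and intersection lie in the
union and intersection of the boundaries of `X` and `X'`, which lie in `S` and `S'`.

Menger's theorem is proved by induction on the graph. Vertices of `A ∩ B` give trivial paths.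
For disjoint `A` and `B`, if some minimum separator `S` leaves edges outside both of its sides,
the two sides are smaller graphs whose `A`–`S` and `S`–`B` path systems glue along `S`;
otherwise every minimum separator lies in `A` or in `B`, and deleting an edge finishes.
-/

theorem Set.ncard_add_ncard_le_of_union_subset_of_inter_subset {α : Type*} [Finite α]
    {P Q X Y : Set α} (hu : P ∪ Q ⊆ X ∪ Y) (hi : P ∩ Q ⊆ X ∩ Y) :
    P.ncard + Q.ncard ≤ X.ncard + Y.ncard := by
  rw [← Set.ncard_union_add_ncard_inter P Q, ← Set.ncard_union_add_ncard_inter X Y]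
  exact add_le_add (Set.ncard_le_ncard hu) (Set.ncard_le_ncard hi)

namespace SimpleGraph

variable {V : Type*} {G : SimpleGraph V} {A B C S T W : Set V} {a b u v x : V}

def restrict (G : SimpleGraph V) (W : Set V) : SimpleGraph V where
  Adj x y := G.Adj x y ∧ x ∈ W ∧ y ∈ W
  symm := ⟨fun _ _ ⟨h, hx, hy⟩ => ⟨h.symm, hy, hx⟩⟩
  loopless := ⟨fun _ ⟨h, _, _⟩ => G.irrefl h⟩

theorem restrict_le (G : SimpleGraph V) (W : Set V) : G.restrict W ≤ G := fun _ _ h => h.1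

namespace Walk

def toRestrict (w : G.Walk u v) (hw : ∀ x ∈ w.support, x ∈ W) : (G.restrict W).Walk u v :=
  w.transfer _ fun e he => by
    induction e using Sym2.ind with
    | _ x y => exact ⟨w.edges_subset_edgeSet he, hw x (w.fst_mem_support_of_mem_edges he),
        hw y (w.snd_mem_support_of_mem_edges he)⟩

@[simp] theorem support_toRestrict (w : G.Walk u v) (hw : ∀ x ∈ w.support, x ∈ W) :
    (w.toRestrict hw).support = w.support :=
  support_transfer _ _

theorem mem_of_mem_support_restrict (w : (G.restrict W).Walk u v) (hu : u ∈ W) :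
    ∀ x ∈ w.support, x ∈ W := by
  induction w with
  | nil => simpa using hu
  | cons h _ ih => simpa [hu] using ih h.2.2

theorem exists_isPath_first_mem (w : G.Walk u v) (h : ∃ s ∈ S, s ∈ w.support) :
    ∃ s ∈ S, ∃ p : G.Walk u s, p.IsPath ∧ (∀ x ∈ p.support, x ∈ S → x = s) ∧
      p.support ⊆ w.support := by
  classical
  suffices ∃ s ∈ S, ∃ p : G.Walk u s, (∀ x ∈ p.support, x ∈ S → x = s) ∧
      p.support ⊆ w.support by
    obtain ⟨s, hs, p, honly, hsub⟩ := this
    exact ⟨s, hs, p.bypass, p.bypass_isPath,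
      fun x hx => honly x (p.support_bypass_subset_support hx),
      List.Subset.trans p.support_bypass_subset_support hsub⟩
  induction w with
  | nil =>
    obtain ⟨s, hs, hsu⟩ := h
    obtain rfl : s = _ := by simpa using hsu
    exact ⟨s, hs, nil, by simp, by simp⟩
  | @cons u c _ hadj p ih =>
    by_cases hu : u ∈ S
    · exact ⟨u, hu, nil, by simp, by simp⟩
    obtain ⟨s, hs, q, honly, hsub⟩ := ih (by
      obtain ⟨s, hs, hsw⟩ := h
      rcases List.mem_cons.1 (support_cons _ _ ▸ hsw) with rfl | h
      exacts [absurd hs hu, ⟨s, hs, h⟩])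
    refine ⟨s, hs, cons hadj q, fun x hx hxS => ?_, ?_⟩
    · rcases List.mem_cons.1 (support_cons _ _ ▸ hx) with rfl | hx
      exacts [absurd hxS hu, honly x hx hxS]
    · simpa using List.cons_subset_cons _ hsub

theorem IsPath.append_reverse {p : G.Walk u x} {q : G.Walk v x} (hp : p.IsPath) (hq : q.IsPath)
    (h : ∀ y ∈ p.support, y ∈ q.support → y = x) : (p.append q.reverse).IsPath := by
  have hq' := (isPath_reverse_iff q |>.2 hq).support_nodup
  rw [isPath_def, support_append, List.nodup_append]
  refine ⟨hp.support_nodup, hq'.sublist (List.tail_sublist _), fun y hyp z hz hyz => ?_⟩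
  subst hyz
  rw [← q.reverse.cons_tail_support] at hq'
  have hyx : y ≠ x := fun e => (List.nodup_cons.1 hq').1 (e ▸ hz)
  exact hyx (h y hyp (by simpa using List.mem_of_mem_tail hz))

end Walk

def Separates (G : SimpleGraph V) (A B S : Set V) : Prop :=
  ∀ ⦃a b : V⦄ (w : G.Walk a b), a ∈ A → b ∈ B → ∃ s ∈ S, s ∈ w.support

theorem Separates.symm (h : G.Separates A B S) : G.Separates B A S := fun _ _ w hb ha => by
  simpa using h w.reverse ha hb

theorem separates_univ (G : SimpleGraph V) (A B : Set V) : G.Separates A B Set.univ :=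
  fun a _ w _ _ => ⟨a, trivial, w.start_mem_support⟩

theorem Separates.insert_insert (h : G.Separates A B S) (x : V) :
    G.Separates (insert x A) B (insert x S) := by
  rintro a b w (rfl | ha) hb
  · exact ⟨a, Set.mem_insert a S, w.start_mem_support⟩
  · obtain ⟨s, hs, hsw⟩ := h w ha hb
    exact ⟨s, Set.mem_insert_of_mem x hs, hsw⟩

structure IsMinSeparator (G : SimpleGraph V) (A B S : Set V) : Prop where
  separates : G.Separates A B S
  ncard_le : ∀ T, G.Separates A B T → S.ncard ≤ T.ncard

theorem exists_isMinSeparator [Finite V] (G : SimpleGraph V) (A B : Set V) :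
    ∃ S, G.IsMinSeparator A B S := by
  obtain ⟨S, hS, hmin⟩ := Set.exists_min_image {S | G.Separates A B S} Set.ncard
    (Set.toFinite _) ⟨_, separates_univ G A B⟩
  exact ⟨S, hS, hmin⟩

theorem IsMinSeparator.symm (h : G.IsMinSeparator A B S) : G.IsMinSeparator B A S :=
  ⟨h.separates.symm, fun T hT => h.ncard_le T hT.symm⟩

theorem IsMinSeparator.of_ncard_le (h : G.IsMinSeparator A B S) (hT : G.Separates A B T)
    (hle : T.ncard ≤ S.ncard) : G.IsMinSeparator A B T :=
  ⟨hT, fun _ hT' => hle.trans (h.ncard_le _ hT')⟩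

def reachableAvoiding (G : SimpleGraph V) (A S : Set V) : Set V :=
  {v | ∃ a ∈ A, ∃ w : G.Walk a v, ∀ x ∈ w.support, x ∉ S}

theorem Separates.notMem_reachableAvoiding (h : G.Separates A B S) (hb : b ∈ B) :
    b ∉ G.reachableAvoiding A S := fun ⟨_, ha, w, hw⟩ =>
  let ⟨_, hs, hsw⟩ := h w ha hb
  hw _ hsw hs

theorem Separates.disjoint_reachableAvoiding (h : G.Separates A B S) :
    Disjoint (G.reachableAvoiding A S) (G.reachableAvoiding B S) := by
  refine Set.disjoint_left.2 fun v ⟨a, ha, w, hw⟩ ⟨b, hb, w', hw'⟩ =>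
    h.notMem_reachableAvoiding hb ⟨a, ha, w.append w'.reverse, fun x hx => ?_⟩
  rw [Walk.support_append, List.mem_append, Walk.support_reverse] at hx
  rcases hx with hx | hx
  exacts [hw x hx, hw' x (List.mem_reverse.1 (List.mem_of_mem_tail hx))]

theorem Walk.IsPath.mem_reachableAvoiding {s : V} {p : G.Walk a s} (hp : p.IsPath) (ha : a ∈ A)
    (hpS : ∀ y ∈ p.support, y ∈ S → y = s) (hx : x ∈ p.support) (hxS : x ∉ S) :
    x ∈ G.reachableAvoiding A S := by
  classical
  refine ⟨a, ha, p.takeUntil x hx, fun y hy hyS => ?_⟩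
  obtain rfl := hpS y (p.support_takeUntil_subset_support hx hy) hyS
  exact Walk.endpoint_notMem_support_takeUntil hp hx (ne_of_mem_of_not_mem hyS hxS) hy

theorem Separates.mem_of_mem_support (h : G.Separates A B S) {s t : V} {p : G.Walk a s}
    {q : G.Walk b t} (hp : p.IsPath) (hq : q.IsPath) (ha : a ∈ A) (hb : b ∈ B)
    (hpS : ∀ y ∈ p.support, y ∈ S → y = s) (hqS : ∀ y ∈ q.support, y ∈ S → y = t)
    (hxp : x ∈ p.support) (hxq : x ∈ q.support) : x ∈ S := by
  by_contra hxS
  exact Set.disjoint_left.1 h.disjoint_reachableAvoiding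
    (hp.mem_reachableAvoiding ha hpS hxp hxS) (hq.mem_reachableAvoiding hb hqS hxq hxS)

theorem Separates.of_restrict_reachableAvoiding (h : G.Separates A B S)
    (hT : (G.restrict (G.reachableAvoiding A S ∪ S)).Separates A S T) : G.Separates A B T := by
  intro a b w ha hb
  obtain ⟨s, hs, p, hp, hpS, hpw⟩ := w.exists_isPath_first_mem (h w ha hb)
  have hpW : ∀ x ∈ p.support, x ∈ G.reachableAvoiding A S ∪ S := fun x hx => by
    by_cases hxS : x ∈ S
    exacts [Or.inr hxS, Or.inl (hp.mem_reachableAvoiding ha hpS hx hxS)]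
  obtain ⟨t, ht, htp⟩ := hT (p.toRestrict hpW) ha hs
  exact ⟨t, ht, hpw (by simpa using htp)⟩

/-- Here `S ∩ B` already separates: the last vertex of an `A`–`B` walk has an edge, so it lies
on the `A`-side of `S` or in `S`, and it cannot be reached from `A` avoiding `S`. -/
theorem IsMinSeparator.subset_right_of_restrict_eq [Finite V] (h : G.IsMinSeparator A B S)
    (hAB : Disjoint A B) (hG : G.restrict (G.reachableAvoiding A S ∪ S) = G) : S ⊆ B := by
  have hsep : G.Separates A B (S ∩ B) := by
    intro a b w ha hb
    have hnil : ¬ w.reverse.Nil := Walk.not_nil_of_ne (hAB.ne_of_mem ha hb).symm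
    have hadj : (G.restrict (G.reachableAvoiding A S ∪ S)).Adj b w.reverse.snd := by
      rw [hG]; exact w.reverse.adj_snd hnil
    rcases hadj.2.1 with hbR | hbS
    · exact absurd hbR (h.separates.notMem_reachableAvoiding hb)
    · exact ⟨b, ⟨hbS, hb⟩, w.end_mem_support⟩
  have := Set.eq_of_subset_of_ncard_le Set.inter_subset_left (h.ncard_le _ hsep)
  exact this ▸ Set.inter_subset_right

theorem Separates.insert_of_deleteEdges {e : Sym2 V} (hx : x ∈ e)
    (h : (G.deleteEdges {e}).Separates A B T) : G.Separates A B (insert x T) := by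
  intro a b w ha hb
  by_cases he : e ∈ w.edges
  · exact ⟨x, Set.mem_insert x T, w.mem_support_of_mem_edges he hx⟩
  · obtain ⟨t, ht, htw⟩ := h (w.toDeleteEdge e he) ha hb
    exact ⟨t, Set.mem_insert_of_mem x ht, by simpa using htw⟩

theorem Separates.union_of_restrict_compl (h : (G.restrict Cᶜ).Separates (A \ C) (B \ C) T) :
    G.Separates A B (T ∪ C) := by
  intro a b w ha hb
  by_cases hwC : ∃ c ∈ C, c ∈ w.support
  · obtain ⟨c, hc, hcw⟩ := hwC
    exact ⟨c, Or.inr hc, hcw⟩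
  push Not at hwC
  obtain ⟨t, ht, htw⟩ := h (w.toRestrict fun x hx hxC => hwC x hxC hx)
    ⟨ha, fun haC => hwC a haC w.start_mem_support⟩ ⟨hb, fun hbC => hwC b hbC w.end_mem_support⟩
  exact ⟨t, Or.inl ht, by simpa using htw⟩

end SimpleGraph

open SimpleGraph

section DisjointPaths

variable {V : Type*} {G H : SimpleGraph V} {A A' B S : Set V} {a b : V} {m n : ℕ}

theorem hasDisjointPaths_zero (G : SimpleGraph V) (A B : Set V) : HasDisjointPaths G A B 0 :=
  ⟨Fin.elim0, Fin.elim0, fun i => i.elim0, fun i => i.elim0, fun i => i.elim0⟩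

theorem hasDisjointPaths_of_family {ι : Type*} [Finite ι] {a b : ι → V}
    (w : ∀ i, G.Walk (a i) (b i)) (hw : ∀ i, a i ∈ A ∧ b i ∈ B ∧ (w i).IsPath)
    (hd : Pairwise fun i j => (w i).support.Disjoint (w j).support) :
    HasDisjointPaths G A B (Nat.card ι) := by
  let e := (Finite.equivFin ι).symm
  exact ⟨fun i => a (e i), fun i => b (e i), fun i => w (e i), fun i => hw (e i),
    fun _ _ hij => hd (e.injective.ne hij)⟩

theorem hasDisjointPaths_one {w : G.Walk a b} (hw : w.IsPath) (ha : a ∈ A) (hb : b ∈ B) :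
    HasDisjointPaths G A B 1 := by
  simpa using hasDisjointPaths_of_family (ι := Unit) (fun _ => w) (fun _ => ⟨ha, hb, hw⟩)
    fun i j hij => (hij (Subsingleton.elim i j)).elim

theorem HasDisjointPaths.mono (h : HasDisjointPaths G A B n) (hmn : m ≤ n) :
    HasDisjointPaths G A B m := by
  obtain ⟨a, b, w, hw, hd⟩ := h
  exact ⟨fun i => a (Fin.castLE hmn i), fun i => b (Fin.castLE hmn i),
    fun i => w (Fin.castLE hmn i), fun i => hw _,
    fun _ _ hij => hd _ _ ((Fin.castLE_injective hmn).ne hij)⟩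

theorem HasDisjointPaths.mono_left (h : HasDisjointPaths G A B n) (hA : A ⊆ A') :
    HasDisjointPaths G A' B n := by
  obtain ⟨a, b, w, hw, hd⟩ := h
  exact ⟨a, b, w, fun i => ⟨hA (hw i).1, (hw i).2⟩, hd⟩

theorem HasDisjointPaths.mono_graph (h : HasDisjointPaths H A B n) (hHG : H ≤ G) :
    HasDisjointPaths G A B n := by
  obtain ⟨a, b, w, hw, hd⟩ := h
  exact ⟨a, b, fun i => (w i).mapLe hHG,
    fun i => ⟨(hw i).1, (hw i).2.1, (hw i).2.2.mapLe hHG⟩, by simpa using hd⟩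

theorem HasDisjointPaths.symm (h : HasDisjointPaths G A B n) : HasDisjointPaths G B A n := by
  obtain ⟨a, b, w, hw, hd⟩ := h
  exact ⟨b, a, fun i => (w i).reverse,
    fun i => ⟨(hw i).2.1, (hw i).1, (hw i).2.2.reverse⟩, by simpa using hd⟩

theorem HasDisjointPaths.le_ncard [Finite V] (h : HasDisjointPaths G A B n)
    (hS : G.Separates A B S) : n ≤ S.ncard := by
  obtain ⟨a, b, w, hw, hd⟩ := h
  choose f hfS hfw using fun i => hS (w i) (hw i).1 (hw i).2.1
  have hf : Function.Injective f := fun i j hij =>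
    by_contra fun hne => hd i j hne (hfw i) (hij ▸ hfw j)
  calc n = (Set.range f).ncard := by rw [Set.ncard_range_of_injective hf, Nat.card_fin]
    _ ≤ S.ncard := Set.ncard_le_ncard (Set.range_subset_iff.2 hfS)

theorem HasDisjointPaths.exists_first_mem (h : HasDisjointPaths G A S n) :
    ∃ (a s : Fin n → V) (p : ∀ i, G.Walk (a i) (s i)),
      (∀ i, a i ∈ A ∧ s i ∈ S ∧ (p i).IsPath ∧ ∀ x ∈ (p i).support, x ∈ S → x = s i) ∧
      ∀ i j, i ≠ j → (p i).support.Disjoint (p j).support := by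
  obtain ⟨a, b, w, hw, hd⟩ := h
  choose s hs p hp hpS hpw using fun i =>
    (w i).exists_isPath_first_mem ⟨b i, (hw i).2.1, (w i).end_mem_support⟩
  exact ⟨a, s, p, fun i => ⟨(hw i).1, hs i, hp i, hpS i⟩,
    fun i j hij _ hxi hxj => hd i j hij (hpw i hxi) (hpw j hxj)⟩

/-- Both path systems end at every vertex of `S`, and as `S` separates, an `A`-path and a
`B`-path can only meet in `S`. -/
theorem HasDisjointPaths.glue [Finite V] (hA : HasDisjointPaths G A S S.ncard)
    (hB : HasDisjointPaths G B S S.ncard) (hS : G.Separates A B S) :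
    HasDisjointPaths G A B S.ncard := by
  obtain ⟨a, s, p, hp, hpd⟩ := hA.exists_first_mem
  obtain ⟨b, t, q, hq, hqd⟩ := hB.exists_first_mem
  have hs : Function.Injective s := fun i j hij => by_contra fun hne =>
    hpd i j hne (p i).end_mem_support (by rw [hij]; exact (p j).end_mem_support)
  have ht : Function.Injective t := fun i j hij => by_contra fun hne =>
    hqd i j hne (q i).end_mem_support (by rw [hij]; exact (q j).end_mem_support)
  have hrange : Set.range t = S := Set.eq_of_subset_of_ncard_le
    (Set.range_subset_iff.2 fun j => (hq j).2.1)
    (by rw [Set.ncard_range_of_injective ht, Nat.card_fin]) (Set.toFinite _)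
  choose σ hσ using fun i => hrange ▸ (hp i).2.1
  have hσ_inj : Function.Injective σ := fun i j hij => hs (by rw [← hσ, ← hσ, hij])
  have hmeet : ∀ i j x, x ∈ (p i).support → x ∈ (q (σ j)).support → x = s i ∧ x = s j := by
    intro i j x hxp hxq
    have hx := hS.mem_of_mem_support (hp i).2.2.1 (hq _).2.2.1 (hp i).1 (hq _).1
      (hp i).2.2.2 (hq _).2.2.2 hxp hxq
    exact ⟨(hp i).2.2.2 x hxp hx, ((hq _).2.2.2 x hxq hx).trans (hσ j)⟩
  let r i := (p i).append ((q (σ i)).copy rfl (hσ i)).reverse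
  have hr : ∀ i x, x ∈ (r i).support → x ∈ (p i).support ∨ x ∈ (q (σ i)).support := by
    intro i x hx
    simp only [r, Walk.support_append, Walk.support_reverse, Walk.support_copy,
      List.mem_append] at hx
    exact hx.imp id fun h => List.mem_reverse.1 (List.mem_of_mem_tail h)
  refine ⟨a, fun i => b (σ i), r, fun i => ⟨(hp i).1, (hq _).1, ?_⟩, ?_⟩
  · refine (hp i).2.2.1.append_reverse (by simpa using (hq (σ i)).2.2.1) fun y hyp hyq => ?_
    exact (hmeet i i y hyp (by simpa using hyq)).1
  · intro i j hij x hxi hxj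
    rcases hr i x hxi with hxi | hxi <;> rcases hr j x hxj with hxj | hxj
    · exact hpd i j hij hxi hxj
    · exact hij (hs ((hmeet i j x hxi hxj).1.symm.trans (hmeet i j x hxi hxj).2))
    · exact hij (hs ((hmeet j i x hxj hxi).2.symm.trans (hmeet j i x hxj hxi).1))
    · exact hqd _ _ (hσ_inj.ne hij) hxi hxj

theorem HasDisjointPaths.add_ncard_of_restrict_compl [Finite V] {C : Set V}
    (h : HasDisjointPaths (G.restrict Cᶜ) (A \ C) (B \ C) m) (hC : C ⊆ A ∩ B) :
    HasDisjointPaths G A B (m + C.ncard) := by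
  obtain ⟨a, b, w, hw, hd⟩ := h
  have hwC i : ∀ x ∈ (w i).support, x ∉ C := (w i).mem_of_mem_support_restrict (hw i).1.2
  let u : ∀ i : Fin m ⊕ C, G.Walk (Sum.elim a (↑) i) (Sum.elim b (↑) i)
    | .inl i => (w i).mapLe (restrict_le G Cᶜ)
    | .inr _ => .nil
  have := hasDisjointPaths_of_family (A := A) (B := B) u ?_ ?_
  · simpa [Nat.card_sum, Nat.card_coe_set_eq] using this
  · rintro (i | ⟨x, hx⟩)
    · exact ⟨(hw i).1.1, (hw i).2.1.1, (hw i).2.2.mapLe _⟩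
    · exact ⟨(hC hx).1, (hC hx).2, Walk.IsPath.nil⟩
  · rintro (i | ⟨x, hx⟩) (j | ⟨y, hy⟩) hij z hzi hzj <;>
      simp only [u, Sum.elim_inl, Sum.elim_inr, Walk.support_map, Hom.coe_ofLE, List.map_id_fun,
        id_eq, Walk.support_nil, List.mem_cons, List.not_mem_nil, or_false] at hzi hzj
    · exact hd i j (fun h => hij (congrArg _ h)) hzi hzj
    · exact hwC i z hzi (hzj ▸ hy)
    · exact hwC j z hzj (hzi ▸ hx)
    · exact hij (by subst hzi hzj; rfl)

end DisjointPaths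

namespace SimpleGraph

variable {V : Type*} [Finite V] {G : SimpleGraph V} {A B S : Set V}

theorem IsMinSeparator.hasDisjointPaths_of_restrict (hS : G.IsMinSeparator A B S)
    (hA : ∃ T, (G.restrict (G.reachableAvoiding A S ∪ S)).Separates A S T ∧
      HasDisjointPaths (G.restrict (G.reachableAvoiding A S ∪ S)) A S T.ncard)
    (hB : ∃ T, (G.restrict (G.reachableAvoiding B S ∪ S)).Separates B S T ∧
      HasDisjointPaths (G.restrict (G.reachableAvoiding B S ∪ S)) B S T.ncard) :
    HasDisjointPaths G A B S.ncard := by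
  obtain ⟨TA, hTA, hPA⟩ := hA
  obtain ⟨TB, hTB, hPB⟩ := hB
  refine ((hPA.mono_graph (restrict_le _ _)).mono ?_).glue
    ((hPB.mono_graph (restrict_le _ _)).mono ?_) hS.separates
  · exact hS.ncard_le _ (hS.separates.of_restrict_reachableAvoiding hTA)
  · exact hS.ncard_le _ (hS.separates.symm.of_restrict_reachableAvoiding hTB).symm

/-- Delete the first edge `a₀c` of an `A`–`B` path that leaves `A` at once. Unless the smaller
graph still has `|S|` disjoint paths, a separator `T` of it yields minimum separators
`T + a₀ ⊆ A` and `T + c ⊆ B`, so `T = ∅` and `|S| = 1`. -/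
theorem exists_separates_hasDisjointPaths_of_forall_subset (hAB : Disjoint A B)
    (ih : ∀ H < G, ∃ T, H.Separates A B T ∧ HasDisjointPaths H A B T.ncard)
    (hsub : ∀ S, G.IsMinSeparator A B S → S ⊆ A ∨ S ⊆ B) :
    ∃ S, G.Separates A B S ∧ HasDisjointPaths G A B S.ncard := by
  obtain ⟨S, hS⟩ := exists_isMinSeparator G A B
  by_cases hreach : ∀ a ∈ A, ∀ b ∈ B, ¬ G.Reachable a b
  · exact ⟨∅, fun a b w ha hb => (hreach a ha b hb w.reachable).elim,
      by simpa using hasDisjointPaths_zero G A B⟩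
  push Not at hreach
  obtain ⟨a, ha, b, hb, ⟨w⟩⟩ := hreach
  obtain ⟨a₀, ha₀, p, hp, hpA, -⟩ := w.reverse.exists_isPath_first_mem ⟨a, ha, by simp⟩
  have hnil : ¬ p.reverse.Nil := Walk.not_nil_of_ne (hAB.ne_of_mem ha₀ hb)
  have hadj : G.Adj a₀ p.reverse.snd := p.reverse.adj_snd hnil
  set c := p.reverse.snd
  have hc : c ∉ A := fun hcA => hadj.ne (hpA c (by simp [c]) hcA).symm
  have hlt : G.deleteEdges {s(a₀, c)} < G := (deleteEdges_le _).lt_of_ne fun h =>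
    Set.disjoint_singleton_right.1 (deleteEdges_eq_self.1 h) hadj
  obtain ⟨T, hT, hP⟩ := ih _ hlt
  by_cases hk : S.ncard ≤ T.ncard
  · exact ⟨S, hS.separates, (hP.mono_graph (deleteEdges_le _)).mono hk⟩
  have hmin x (hx : x ∈ s(a₀, c)) : G.IsMinSeparator A B (insert x T) :=
    hS.of_ncard_le (hT.insert_of_deleteEdges hx) ((Set.ncard_insert_le x T).trans (by omega))
  have hTa : insert a₀ T ⊆ A := (hsub _ (hmin a₀ (Sym2.mem_mk_left _ _))).resolve_right
    fun h => hAB.ne_of_mem ha₀ (h (Set.mem_insert _ _)) rfl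
  have hTc : insert c T ⊆ B := (hsub _ (hmin c (Sym2.mem_mk_right _ _))).resolve_left
    fun h => hc (h (Set.mem_insert _ _))
  obtain rfl : T = ∅ := Set.eq_empty_of_forall_notMem fun x hx =>
    hAB.ne_of_mem (hTa (Set.mem_insert_of_mem _ hx)) (hTc (Set.mem_insert_of_mem _ hx)) rfl
  exact ⟨{a₀}, by simpa using (hmin a₀ (Sym2.mem_mk_left _ _)).separates,
    by simpa using hasDisjointPaths_one hp.reverse ha₀ hb⟩

theorem exists_separates_hasDisjointPaths_of_disjoint (hAB : Disjoint A B)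
    (ih : ∀ H < G, ∀ A B : Set V, ∃ T, H.Separates A B T ∧ HasDisjointPaths H A B T.ncard) :
    ∃ S, G.Separates A B S ∧ HasDisjointPaths G A B S.ncard := by
  by_cases hsplit : ∃ S, G.IsMinSeparator A B S ∧ G.restrict (G.reachableAvoiding A S ∪ S) < G ∧
      G.restrict (G.reachableAvoiding B S ∪ S) < G
  · obtain ⟨S, hS, hA, hB⟩ := hsplit
    exact ⟨S, hS.separates, hS.hasDisjointPaths_of_restrict (ih _ hA A S) (ih _ hB B S)⟩
  refine exists_separates_hasDisjointPaths_of_forall_subset hAB (fun H hH => ih H hH A B)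
    fun S hS => ?_
  rcases (restrict_le G (G.reachableAvoiding A S ∪ S)).lt_or_eq with hA | hA
  · have hB := (restrict_le G (G.reachableAvoiding B S ∪ S)).lt_or_eq.resolve_left
      fun hB => hsplit ⟨S, hS, hA, hB⟩
    exact Or.inl (hS.symm.subset_right_of_restrict_eq hAB.symm hB)
  · exact Or.inr (hS.subset_right_of_restrict_eq hAB hA)

theorem exists_separates_hasDisjointPaths (G : SimpleGraph V) (A B : Set V) :
    ∃ S, G.Separates A B S ∧ HasDisjointPaths G A B S.ncard := by
  induction G using WellFoundedLT.induction generalizing A B with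
  | _ G ih =>
  obtain ⟨T, hT, hP⟩ := exists_separates_hasDisjointPaths_of_disjoint
    (G := G.restrict (A ∩ B)ᶜ) (A := A \ (A ∩ B)) (B := B \ (A ∩ B))
    (Set.disjoint_left.2 fun _ ha hb => ha.2 ⟨ha.1, hb.1⟩)
    fun H hH => ih H (hH.trans_le (restrict_le _ _))
  exact ⟨T ∪ (A ∩ B), hT.union_of_restrict_compl,
    (hP.add_ncard_of_restrict_compl subset_rfl).mono (Set.ncard_union_le _ _)⟩

end SimpleGraph

namespace SimpleGraph

variable {V : Type*} {G : SimpleGraph V} {A A' B S X Y : Set V}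

def cutOff (G : SimpleGraph V) (B S : Set V) : Set V :=
  {v | ∀ ⦃b⦄ (w : G.Walk v b), b ∈ B → ∃ s ∈ S, s ∈ w.support}

def boundary (G : SimpleGraph V) (B X : Set V) : Set V :=
  {v ∈ X | v ∈ B ∨ ∃ u, G.Adj v u ∧ u ∉ X}

theorem Separates.subset_cutOff (h : G.Separates A B S) : A ⊆ G.cutOff B S :=
  fun _ ha _ w hb => h w ha hb

theorem separates_boundary (hAX : A ⊆ X) : G.Separates A B (G.boundary B X) := by
  suffices ∀ ⦃a b⦄ (w : G.Walk a b), a ∈ X → b ∈ B → ∃ s ∈ G.boundary B X, s ∈ w.support from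
    fun a b w ha => this w (hAX ha)
  intro a b w
  induction w with
  | nil => exact fun ha hb => ⟨_, ⟨ha, Or.inl hb⟩, by simp⟩
  | @cons u c _ hadj p ih =>
    intro hu hb
    by_cases hc : c ∈ X
    · obtain ⟨s, hs, hsp⟩ := ih hc hb
      exact ⟨s, hs, by simp [hsp]⟩
    · exact ⟨u, ⟨hu, Or.inr ⟨c, hadj, hc⟩⟩, by simp⟩

theorem boundary_cutOff_subset : G.boundary B (G.cutOff B S) ⊆ S := by
  rintro v ⟨hv, hvB | ⟨u, hadj, hu⟩⟩
  · simpa using hv .nil hvB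
  · simp only [cutOff, Set.mem_ofPred_eq, not_forall, not_exists, not_and] at hu
    obtain ⟨b, w, hb, hw⟩ := hu
    obtain ⟨s, hs, hsw⟩ := hv (.cons hadj w) hb
    rw [Walk.support_cons, List.mem_cons] at hsw
    exact hsw.elim (· ▸ hs) fun h => (hw s hs h).elim

theorem boundary_union_union_boundary_inter_subset :
    G.boundary B (X ∪ Y) ∪ G.boundary B (X ∩ Y) ⊆ G.boundary B X ∪ G.boundary B Y := by
  rintro v (⟨hvX | hvY, hv⟩ | ⟨⟨hvX, hvY⟩, hvB | ⟨u, hadj, hu⟩⟩)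
  · exact Or.inl ⟨hvX, hv.imp_right fun ⟨u, hadj, hu⟩ => ⟨u, hadj, fun h => hu (Or.inl h)⟩⟩
  · exact Or.inr ⟨hvY, hv.imp_right fun ⟨u, hadj, hu⟩ => ⟨u, hadj, fun h => hu (Or.inr h)⟩⟩
  · exact Or.inl ⟨hvX, Or.inl hvB⟩
  · by_cases huX : u ∈ X
    · exact Or.inr ⟨hvY, Or.inr ⟨u, hadj, fun huY => hu ⟨huX, huY⟩⟩⟩
    · exact Or.inl ⟨hvX, Or.inr ⟨u, hadj, huX⟩⟩

theorem boundary_union_inter_boundary_inter_subset :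
    G.boundary B (X ∪ Y) ∩ G.boundary B (X ∩ Y) ⊆ G.boundary B X ∩ G.boundary B Y := by
  rintro v ⟨⟨-, hvB | ⟨u, hadj, hu⟩⟩, ⟨hvX, hvY⟩, -⟩
  · exact ⟨⟨hvX, Or.inl hvB⟩, ⟨hvY, Or.inl hvB⟩⟩
  · exact ⟨⟨hvX, Or.inr ⟨u, hadj, fun h => hu (Or.inl h)⟩⟩,
      ⟨hvY, Or.inr ⟨u, hadj, fun h => hu (Or.inr h)⟩⟩⟩

/-- The witnesses are the boundaries of the union and of the intersection of the regions cut off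
from `B` by `S` and by `S'`. -/
theorem Separates.exists_union_inter [Finite V] {S' : Set V} (h : G.Separates A B S)
    (h' : G.Separates A' B S') : ∃ SU SI, G.Separates (A ∪ A') B SU ∧
      G.Separates (A ∩ A') B SI ∧ SU.ncard + SI.ncard ≤ S.ncard + S'.ncard := by
  set X := G.cutOff B S
  set Y := G.cutOff B S'
  refine ⟨G.boundary B (X ∪ Y), G.boundary B (X ∩ Y),
    separates_boundary (Set.union_subset_union h.subset_cutOff h'.subset_cutOff),
    separates_boundary (Set.inter_subset_inter h.subset_cutOff h'.subset_cutOff), ?_⟩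
  calc _ ≤ (G.boundary B X).ncard + (G.boundary B Y).ncard :=
        Set.ncard_add_ncard_le_of_union_subset_of_inter_subset
          boundary_union_union_boundary_inter_subset boundary_union_inter_boundary_inter_subset
    _ ≤ S.ncard + S'.ncard :=
        add_le_add (Set.ncard_le_ncard boundary_cutOff_subset)
          (Set.ncard_le_ncard boundary_cutOff_subset)

end SimpleGraph

section Rank

variable {V : Type*} [Finite V] {G : SimpleGraph V} {A B S : Set V} {n : ℕ}

theorem maxDisjointPaths_le (hS : G.Separates A B S) : maxDisjointPaths G B A ≤ S.ncard :=
  csSup_le ⟨0, hasDisjointPaths_zero G A B⟩ fun _ hq => hq.le_ncard hS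

theorem le_maxDisjointPaths (h : HasDisjointPaths G A B n) : n ≤ maxDisjointPaths G B A :=
  le_csSup ⟨_, fun _ hq => hq.le_ncard (separates_univ G A B)⟩ h

theorem exists_separates_maxDisjointPaths_eq (G : SimpleGraph V) (A B : Set V) :
    ∃ S, G.Separates A B S ∧ HasDisjointPaths G A B S.ncard ∧ maxDisjointPaths G B A = S.ncard := by
  obtain ⟨S, hS, hP⟩ := exists_separates_hasDisjointPaths G A B
  exact ⟨S, hS, hP, (maxDisjointPaths_le hS).antisymm (le_maxDisjointPaths hP)⟩

end Rank

/-- For vertex sets `V₁, V₂` of a finite graph `G`, the function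
`A ↦ κ(A)` (maximum number of disjoint `A`–`V₂` paths), for `A ⊆ V₁`, is the rank
function of a matroid on `V₁`: it vanishes on `∅`, is monotone, increases by at most one
upon adding an element, and is submodular. -/
theorem maxDisjointPaths_is_matroid_rank
    {V : Type*} [Fintype V] (G : SimpleGraph V) (V₁ V₂ : Set V) :
    maxDisjointPaths G V₂ ∅ = 0 ∧
    (∀ A A' : Set V, A ⊆ A' → A' ⊆ V₁ →
      maxDisjointPaths G V₂ A ≤ maxDisjointPaths G V₂ A') ∧
    (∀ A : Set V, A ⊆ V₁ → ∀ x ∈ V₁,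
      maxDisjointPaths G V₂ (insert x A) ≤ maxDisjointPaths G V₂ A + 1) ∧
    (∀ A B : Set V, A ⊆ V₁ → B ⊆ V₁ →
      maxDisjointPaths G V₂ (A ∪ B) + maxDisjointPaths G V₂ (A ∩ B) ≤
        maxDisjointPaths G V₂ A + maxDisjointPaths G V₂ B) := by
  refine ⟨?_, ?_, ?_, ?_⟩
  · simpa using maxDisjointPaths_le (G := G) (A := ∅) (B := V₂) (S := ∅) fun _ _ _ ha => ha.elim
  · intro A A' hAA' _
    obtain ⟨S, -, hP, hκ⟩ := exists_separates_maxDisjointPaths_eq G A V₂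
    exact hκ ▸ le_maxDisjointPaths (hP.mono_left hAA')
  · intro A _ x _
    obtain ⟨S, hS, -, hκ⟩ := exists_separates_maxDisjointPaths_eq G A V₂
    exact hκ ▸ (maxDisjointPaths_le (hS.insert_insert x)).trans (Set.ncard_insert_le x S)
  · intro A B _ _
    obtain ⟨SA, hSA, -, hκA⟩ := exists_separates_maxDisjointPaths_eq G A V₂
    obtain ⟨SB, hSB, -, hκB⟩ := exists_separates_maxDisjointPaths_eq G B V₂
    obtain ⟨SU, SI, hSU, hSI, hle⟩ := hSA.exists_union_inter hSB
    rw [hκA, hκB]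
    exact (add_le_add (maxDisjointPaths_le hSU) (maxDisjointPaths_le hSI)).trans hle
end

section
/- Let M_0 and M_1 be two matroids on a common ground set E of rank functions r_0 and r_1. If M_0 and M_1 have no common independent set of size m, then there exists a partition {A, B} of E with r_0(A) + r_1(B) < m. -/
open Set

/-- The rank of a set `X` in a matroid `M`: the largest cardinality of an independent
subset of `X`. -/
noncomputable def matroidRank {α : Type*} (M : Matroid α) (X : Set α) : ℕ :=
  sSup {n : ℕ | ∃ I ⊆ X, M.Indep I ∧ I.ncard = n}

namespace MIAux

variable {α : Type*}

/-- Finset version of the rank. -/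
noncomputable def rkf (M : Matroid α) (X : Finset α) : ℕ := matroidRank M ↑X

lemma rk_bddAbove (M : Matroid α) (X : Finset α) :
    BddAbove {n : ℕ | ∃ I ⊆ (↑X : Set α), M.Indep I ∧ I.ncard = n} := by
  refine ⟨X.card, ?_⟩
  rintro n ⟨I, hIX, -, rfl⟩
  have := Set.ncard_le_ncard hIX X.finite_toSet
  simpa [Set.ncard_coe_finset] using this

lemma le_rkf {M : Matroid α} {X I : Finset α} (hIX : I ⊆ X) (hI : M.Indep ↑I) :
    I.card ≤ rkf M X := by
  refine le_csSup (rk_bddAbove M X) ?_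
  exact ⟨↑I, Finset.coe_subset.mpr hIX, hI, Set.ncard_coe_finset I⟩

lemma rkf_attain (M : Matroid α) (X : Finset α) :
    ∃ I : Finset α, I ⊆ X ∧ M.Indep ↑I ∧ I.card = rkf M X := by
  have hne : {n : ℕ | ∃ I ⊆ (↑X : Set α), M.Indep I ∧ I.ncard = n}.Nonempty :=
    ⟨0, ∅, by simp, M.empty_indep, by simp⟩
  have hmem := Nat.sSup_mem hne (rk_bddAbove M X)
  obtain ⟨I, hIX, hI, hcard⟩ := hmem
  have hfin : I.Finite := X.finite_toSet.subset hIX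
  refine ⟨hfin.toFinset, ?_, ?_, ?_⟩
  · rw [← Finset.coe_subset, hfin.coe_toFinset]; exact hIX
  · rw [hfin.coe_toFinset]; exact hI
  · rw [← Set.ncard_coe_finset, hfin.coe_toFinset]; exact hcard

lemma rkf_le_card (M : Matroid α) (X : Finset α) : rkf M X ≤ X.card := by
  obtain ⟨I, hIX, -, hcard⟩ := rkf_attain M X
  rw [← hcard]; exact Finset.card_le_card hIX

lemma rkf_mono (M : Matroid α) {X Y : Finset α} (h : X ⊆ Y) : rkf M X ≤ rkf M Y := by
  obtain ⟨I, hIX, hI, hcard⟩ := rkf_attain M X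
  rw [← hcard]; exact le_rkf (hIX.trans h) hI

lemma rkf_empty (M : Matroid α) : rkf M (∅ : Finset α) = 0 := by
  have := rkf_le_card M (∅ : Finset α); simpa using this

lemma indep_of_rkf {M : Matroid α} {I : Finset α} (h : rkf M I = I.card) : M.Indep ↑I := by
  obtain ⟨J, hJI, hJ, hcard⟩ := rkf_attain M I
  have : J = I := Finset.eq_of_subset_of_card_le hJI (by omega)
  rwa [← this]

lemma rkf_insert_le [DecidableEq α] (M : Matroid α) (X : Finset α) (e : α) :
    rkf M (insert e X) ≤ rkf M X + 1 := by
  obtain ⟨I, hIX, hI, hcard⟩ := rkf_attain M (insert e X)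
  have h1 : I.erase e ⊆ X := by
    intro x hx
    have hx' := Finset.mem_erase.mp hx
    rcases Finset.mem_insert.mp (hIX hx'.2) with h | h
    · exact absurd h hx'.1
    · exact h
  have h2 : M.Indep ↑(I.erase e) := by
    refine hI.subset ?_
    rw [Finset.coe_erase]; exact diff_subset
  have h3 := le_rkf h1 h2
  by_cases he : e ∈ I
  · have := Finset.card_erase_add_one he; omega
  · rw [Finset.erase_eq_of_notMem he] at h3; omega

lemma exists_superset_card [DecidableEq α] (M : Matroid α) (X : Finset α) :
    ∀ (d : ℕ) (I : Finset α), I ⊆ X → M.Indep ↑I → rkf M X - I.card = d →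
      ∃ J : Finset α, I ⊆ J ∧ J ⊆ X ∧ M.Indep ↑J ∧ J.card = rkf M X := by
  intro d
  induction d with
  | zero =>
    intro I hIX hI hd
    have h1 := le_rkf hIX hI
    exact ⟨I, Finset.Subset.refl I, hIX, hI, by omega⟩
  | succ n ih =>
    intro I hIX hI hd
    obtain ⟨K, hKX, hK, hKcard⟩ := rkf_attain M X
    have hlt : (↑I : Set α).encard < (↑K : Set α).encard := by
      rw [Set.encard_coe_eq_coe_finsetCard, Set.encard_coe_eq_coe_finsetCard]
      exact_mod_cast (by omega : I.card < K.card)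
    obtain ⟨x, hx, hx2⟩ := hI.augment hK hlt
    have hxK : x ∈ K := by
      have := hx.1; exact_mod_cast this
    have hxI : x ∉ I := by
      have := hx.2; exact_mod_cast this
    have hIx : M.Indep ↑(insert x I) := by rw [Finset.coe_insert]; exact hx2
    have hIxX : insert x I ⊆ X := Finset.insert_subset (hKX hxK) hIX
    refine (ih (insert x I) hIxX hIx ?_).imp fun J hJ =>
      ⟨(Finset.subset_insert x I).trans hJ.1, hJ.2.1, hJ.2.2⟩
    rw [Finset.card_insert_of_notMem hxI]; omega

lemma rkf_submod [DecidableEq α] (M : Matroid α) (X Y : Finset α) :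
    rkf M (X ∩ Y) + rkf M (X ∪ Y) ≤ rkf M X + rkf M Y := by
  obtain ⟨I, hIXY, hI, hIcard⟩ := rkf_attain M (X ∩ Y)
  obtain ⟨J, hIJ, hJXY, hJ, hJcard⟩ :=
    exists_superset_card M (X ∪ Y) (rkf M (X ∪ Y) - I.card) I
      (hIXY.trans ((Finset.inter_subset_left).trans Finset.subset_union_left)) hI rfl
  have h1 : (J ∩ X).card ≤ rkf M X := by
    refine le_rkf Finset.inter_subset_right (hJ.subset ?_)
    rw [Finset.coe_inter]; exact inter_subset_left
  have h2 : (J ∩ Y).card ≤ rkf M Y := by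
    refine le_rkf Finset.inter_subset_right (hJ.subset ?_)
    rw [Finset.coe_inter]; exact inter_subset_left
  have h3 := Finset.card_inter_add_card_union (J ∩ X) (J ∩ Y)
  have e1 : (J ∩ X) ∩ (J ∩ Y) = J ∩ (X ∩ Y) := by ext x; simp; tauto
  have e2 : (J ∩ X) ∪ (J ∩ Y) = J := by
    ext x; simp only [Finset.mem_union, Finset.mem_inter]
    constructor
    · tauto
    · intro hx; rcases Finset.mem_union.mp (hJXY hx) with h | h
      · exact Or.inl ⟨hx, h⟩
      · exact Or.inr ⟨hx, h⟩
  rw [e1, e2] at h3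
  have h4 : I.card ≤ (J ∩ (X ∩ Y)).card :=
    Finset.card_le_card (Finset.subset_inter hIJ hIXY)
  omega

/-- Abstract rank functions used in the induction. -/
structure GoodRk [DecidableEq α] (r : Finset α → ℕ) : Prop where
  empty : r ∅ = 0
  mono : ∀ ⦃X Y : Finset α⦄, X ⊆ Y → r X ≤ r Y
  insert_le : ∀ (X : Finset α) (e : α), r (insert e X) ≤ r X + 1
  submod : ∀ X Y : Finset α, r (X ∩ Y) + r (X ∪ Y) ≤ r X + r Y

lemma goodRk_rkf [DecidableEq α] (M : Matroid α) : GoodRk (rkf M) :=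
  ⟨rkf_empty M, fun _ _ h => rkf_mono M h, rkf_insert_le M, rkf_submod M⟩

lemma GoodRk.insert_eq_of_loop [DecidableEq α] {r : Finset α → ℕ} (h : GoodRk r) {e : α}
    (he : r {e} = 0) (X : Finset α) : r (insert e X) = r X := by
  have h1 := h.submod X {e}
  have h2 : X ∪ {e} = insert e X := by ext x; simp [or_comm]
  rw [h2, he] at h1
  have h3 := h.mono (Finset.subset_insert e X)
  omega

lemma GoodRk.contract [DecidableEq α] {r : Finset α → ℕ} (h : GoodRk r) {e : α}
    (he : r {e} = 1) : GoodRk (fun X => r (insert e X) - 1) := by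
  have hone : ∀ X : Finset α, 1 ≤ r (insert e X) := by
    intro X
    calc 1 = r {e} := he.symm
    _ ≤ r (insert e X) := h.mono (by simp)
  constructor
  · show r (insert e ∅) - 1 = 0
    have h0 : insert e (∅ : Finset α) = {e} := rfl
    rw [h0, he]
  · intro X Y hXY
    exact Nat.sub_le_sub_right (h.mono (Finset.insert_subset_insert e hXY)) 1
  · intro X f
    show r (insert e (insert f X)) - 1 ≤ r (insert e X) - 1 + 1
    rw [Finset.insert_comm]
    have := h.insert_le (insert e X) f
    have := hone X
    omega
  · intro X Y
    show r (insert e (X ∩ Y)) - 1 + (r (insert e (X ∪ Y)) - 1) ≤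
      (r (insert e X) - 1) + (r (insert e Y) - 1)
    have e1 : insert e X ∩ insert e Y = insert e (X ∩ Y) := by
      ext x
      simp only [Finset.mem_insert, Finset.mem_inter]
      tauto
    have e2 : insert e X ∪ insert e Y = insert e (X ∪ Y) := by
      ext x
      simp only [Finset.mem_insert, Finset.mem_union]
      tauto
    have hs := h.submod (insert e X) (insert e Y)
    rw [e1, e2] at hs
    have := hone (X ∩ Y)
    have := hone (X ∪ Y)
    have := hone X
    have := hone Y
    omega

lemma main [DecidableEq α] :
    ∀ (n : ℕ) (E : Finset α) (r0 r1 : Finset α → ℕ) (k : ℕ), E.card ≤ n →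
      GoodRk r0 → GoodRk r1 →
      (∀ I : Finset α, I ⊆ E → r0 I = I.card → r1 I = I.card → I.card ≤ k) →
      ∃ A : Finset α, A ⊆ E ∧ r0 A + r1 (E \ A) ≤ k := by
  intro n
  induction n with
  | zero =>
    intro E r0 r1 k hcard hg0 hg1 _
    have hE : E = ∅ := Finset.card_eq_zero.mp (Nat.le_antisymm hcard (Nat.zero_le _))
    subst hE
    exact ⟨∅, Finset.Subset.refl _, by simp [hg0.empty, hg1.empty]⟩
  | succ n ih =>
    intro E r0 r1 k hcard hg0 hg1 hcom
    rcases E.eq_empty_or_nonempty with hE | ⟨e, he⟩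
    · subst hE
      exact ⟨∅, Finset.Subset.refl _, by simp [hg0.empty, hg1.empty]⟩
    · set E' := E.erase e with hE'
      have hE'card : E'.card ≤ n := by
        have h1 : E'.card = E.card - 1 := Finset.card_erase_of_mem he
        have h2 : 1 ≤ E.card := Finset.card_pos.mpr ⟨e, he⟩
        omega
      have hE'sub : E' ⊆ E := Finset.erase_subset e E
      have h0le : r0 {e} ≤ 1 := by
        have := hg0.insert_le ∅ e
        simpa [hg0.empty] using this
      have h1le : r1 {e} ≤ 1 := by
        have := hg1.insert_le ∅ e
        simpa [hg1.empty] using this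
      by_cases h0e : r0 {e} = 0
      · -- e is a loop of M₀ : put it in A
        obtain ⟨A, hA, hsum⟩ := ih E' r0 r1 k hE'card hg0 hg1
          (fun I hI ha hb => hcom I (hI.trans hE'sub) ha hb)
        refine ⟨insert e A, Finset.insert_subset he (hA.trans hE'sub), ?_⟩
        have hEd : E \ insert e A = E' \ A := by
          ext x
          simp only [Finset.mem_sdiff, Finset.mem_insert, hE', Finset.mem_erase]
          tauto
        rw [hEd, hg0.insert_eq_of_loop h0e]
        exact hsum
      by_cases h1e : r1 {e} = 0
      · -- e is a loop of M₁ : put it in B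
        obtain ⟨A, hA, hsum⟩ := ih E' r0 r1 k hE'card hg0 hg1
          (fun I hI ha hb => hcom I (hI.trans hE'sub) ha hb)
        refine ⟨A, hA.trans hE'sub, ?_⟩
        have heA : e ∉ A := fun hm => (Finset.mem_erase.mp (hA hm)).1 rfl
        have hEd : E \ A = insert e (E' \ A) := by
          ext x
          simp only [Finset.mem_sdiff, Finset.mem_insert, hE', Finset.mem_erase]
          by_cases hx : x = e
          · subst hx; simp [he, heA]
          · tauto
        rw [hEd, hg1.insert_eq_of_loop h1e]
        exact hsum
      -- e is not a loop in either matroid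
      have h0e' : r0 {e} = 1 := by omega
      have h1e' : r1 {e} = 1 := by omega
      rcases k with _ | k'
      · exfalso
        have := hcom {e} (Finset.singleton_subset_iff.mpr he)
          (by simpa using h0e') (by simpa using h1e')
        simp at this
      -- deletion
      obtain ⟨A1, hA1, hsum1⟩ := ih E' r0 r1 (k' + 1) hE'card hg0 hg1
        (fun I hI ha hb => hcom I (hI.trans hE'sub) ha hb)
      -- contraction
      have hg0' := hg0.contract h0e'
      have hg1' := hg1.contract h1e'
      have hone0 : ∀ X : Finset α, 1 ≤ r0 (insert e X) := by
        intro X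
        calc 1 = r0 {e} := h0e'.symm
        _ ≤ r0 (insert e X) := hg0.mono (by simp)
      have hone1 : ∀ X : Finset α, 1 ≤ r1 (insert e X) := by
        intro X
        calc 1 = r1 {e} := h1e'.symm
        _ ≤ r1 (insert e X) := hg1.mono (by simp)
      have hclaim : ∀ I : Finset α, I ⊆ E' → r0 (insert e I) - 1 = I.card →
          r1 (insert e I) - 1 = I.card → I.card ≤ k' := by
        intro I hI ha hb
        have heI : e ∉ I := fun hm => (Finset.mem_erase.mp (hI hm)).1 rfl
        have hcI : (insert e I).card = I.card + 1 := Finset.card_insert_of_notMem heI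
        have h0' : r0 (insert e I) = (insert e I).card := by
          have := hone0 I; omega
        have h1' : r1 (insert e I) = (insert e I).card := by
          have := hone1 I; omega
        have := hcom (insert e I) (Finset.insert_subset he (hI.trans hE'sub)) h0' h1'
        omega
      obtain ⟨A2, hA2, hsum2⟩ := ih E' (fun X => r0 (insert e X) - 1)
        (fun X => r1 (insert e X) - 1) k' hE'card hg0' hg1' hclaim
      set B1 := E' \ A1 with hB1
      set B2 := E' \ A2 with hB2
      have hr2 : r0 (insert e A2) + r1 (insert e B2) ≤ k' + 2 := by
        have := hone0 A2
        have := hone1 B2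
        omega
      set P := A1 ∪ insert e A2 with hP
      set Q := A1 ∩ insert e A2 with hQ
      have hsub0 : r0 Q + r0 P ≤ r0 A1 + r0 (insert e A2) := hg0.submod A1 (insert e A2)
      have hsub1 := hg1.submod B1 (insert e B2)
      have hm1 : r1 (E \ P) ≤ r1 (B1 ∩ insert e B2) := by
        refine hg1.mono ?_
        intro x
        simp only [hP, hB1, hB2, hE', Finset.mem_sdiff, Finset.mem_union, Finset.mem_insert,
          Finset.mem_inter, Finset.mem_erase]
        tauto
      have hm2 : r1 (E \ Q) ≤ r1 (B1 ∪ insert e B2) := by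
        refine hg1.mono ?_
        intro x
        simp only [hQ, hB1, hB2, hE', Finset.mem_sdiff, Finset.mem_union, Finset.mem_insert,
          Finset.mem_inter, Finset.mem_erase]
        tauto
      have hPE : P ⊆ E :=
        Finset.union_subset (hA1.trans hE'sub) (Finset.insert_subset he (hA2.trans hE'sub))
      have hQE : Q ⊆ E := Finset.inter_subset_left.trans (hA1.trans hE'sub)
      by_cases hc : r0 P + r1 (E \ P) ≤ k' + 1
      · exact ⟨P, hPE, hc⟩
      · refine ⟨Q, hQE, ?_⟩
        omega

end MIAux

/-- Edmonds' matroid intersection, contrapositive direction.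
If two matroids `M₀`, `M₁` on a common finite ground set `E` have no common independent
set of size `m`, then there is a partition `{A, B}` of `E` with `r₀(A) + r₁(B) < m`. -/
theorem matroid_intersection_partition_of_no_common_indep
    {α : Type*} (E : Set α) (hE : E.Finite) (M₀ M₁ : Matroid α)
    (hE₀ : M₀.E = E) (hE₁ : M₁.E = E) (m : ℕ)
    (h : ¬ ∃ I : Set α, M₀.Indep I ∧ M₁.Indep I ∧ I.ncard = m) :
    ∃ A B : Set α, A ∪ B = E ∧ A ∩ B = ∅ ∧
      matroidRank M₀ A + matroidRank M₁ B < m := by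
  classical
  rcases m with _ | m'
  · exact absurd ⟨∅, M₀.empty_indep, M₁.empty_indep, by simp⟩ h
  set F := hE.toFinset with hFdef
  have hF : ↑F = E := hE.coe_toFinset
  have hcom : ∀ I : Finset α, I ⊆ F → MIAux.rkf M₀ I = I.card → MIAux.rkf M₁ I = I.card →
      I.card ≤ m' := by
    intro I hIF h0 h1
    by_contra hlt
    have hm : m' + 1 ≤ I.card := by omega
    obtain ⟨t, ht, htc⟩ := Finset.exists_subset_card_eq hm
    have hi0 : M₀.Indep ↑I := MIAux.indep_of_rkf h0
    have hi1 : M₁.Indep ↑I := MIAux.indep_of_rkf h1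
    exact h ⟨↑t, hi0.subset (Finset.coe_subset.mpr ht), hi1.subset (Finset.coe_subset.mpr ht),
      by rw [Set.ncard_coe_finset, htc]⟩
  obtain ⟨A, hAF, hsum⟩ := MIAux.main F.card F (MIAux.rkf M₀) (MIAux.rkf M₁) m' le_rfl
    (MIAux.goodRk_rkf M₀) (MIAux.goodRk_rkf M₁) hcom
  have hAE : (↑A : Set α) ⊆ E := hF ▸ Finset.coe_subset.mpr hAF
  refine ⟨↑A, ↑(F \ A), ?_, ?_, ?_⟩
  · rw [Finset.coe_sdiff, hF]
    exact Set.union_diff_cancel' (Set.Subset.refl _) hAE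
  · rw [Finset.coe_sdiff, hF]
    ext x; simp only [Set.mem_inter_iff, Set.mem_diff, Set.mem_empty_iff_false, iff_false]
    tauto
  · unfold MIAux.rkf at hsum
    exact Nat.lt_succ_of_le hsum
end
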